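/- For every s > 0 and P > 0, the near-field joint density p_NF^S(x₁,x₂) = (1/(√(2πs)·A₁·P)) · e^{−(x₁+x₂)²/(2s)} · sint²((x₁−x₂)²/(4P²)) has cross moment ∫_{ℝ²} x₁ x₂ p_NF^S(x₁,x₂) dx₁ dx₂ = (1/4)(s − 4A₂P²/A₁), where A₁ := ∫_ℝ sint²(ξ²) dξ and A₂ := ∫_ℝ ξ² sint²(ξ²) dξ. -/

import Mathlib

/-!
In the coordinates `x₁ = a + b`, `x₂ = a - b` the density factorises into a centred Gaussian in
`a` times `sint²(b²/P²)`, and `x₁ x₂ = a² - b²`; the cross moment is therefore a difference of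
second moments, `s/4` for the Gaussian and `P² A₂ / A₁` after the rescaling `b = P ξ`.
The one analytic input is that `A₁` and `A₂` are finite: `sint x = O(1/x)` because the
Dirichlet integral `∫₀^∞ sinc` equals `π/2`. This follows, with the tail bound `2/A`, from
`sinc t = ∫₀^∞ e^{-ts} sin t ds` and an exchange of the order of integration.
-/

open MeasureTheory Real

/-- `sinc x = sin x / x` for `x ≠ 0`, and `sinc 0 = 1`. -/
noncomputable def sinc (x : ℝ) : ℝ := if x = 0 then 1 else Real.sin x / x

/-- `sint x = 1 − (2/π) ∫₀ˣ sinc t dt`. -/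
noncomputable def sint (x : ℝ) : ℝ := 1 - (2 / Real.pi) * ∫ t in (0:ℝ)..x, _root_.sinc t

/-- `A₁ = ∫_ℝ sint²(ξ²) dξ`. -/
noncomputable def A₁ : ℝ := ∫ ξ : ℝ, (sint (ξ ^ 2)) ^ 2

/-- The near-field joint probability density of the SPDC two-photon state. -/
noncomputable def pNF (s P x₁ x₂ : ℝ) : ℝ :=
  (Real.sqrt (2 * Real.pi * s) * A₁ * P)⁻¹ * Real.exp (-(x₁ + x₂) ^ 2 / (2 * s)) *
    (sint ((x₁ - x₂) ^ 2 / (4 * P ^ 2))) ^ 2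

/-- `A₂ = ∫_ℝ ξ² sint²(ξ²) dξ`. -/
noncomputable def A₂ : ℝ := ∫ ξ : ℝ, ξ ^ 2 * (sint (ξ ^ 2)) ^ 2

open Set Filter

lemma sinc_eq_real_sinc : _root_.sinc = Real.sinc := rfl

@[fun_prop]
lemma continuous_sint : Continuous sint := by
  have := intervalIntegral.continuous_primitive (μ := volume)
    (fun a b => Real.continuous_sinc.intervalIntegrable a b) 0
  unfold sint
  rw [sinc_eq_real_sinc]
  fun_prop

lemma integral_Ioi_exp_neg_mul {t : ℝ} (ht : 0 < t) :
    ∫ s in Ioi (0 : ℝ), exp (-t * s) = t⁻¹ := by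
  rw [integral_exp_mul_Ioi (neg_neg_of_pos ht)]
  simp

lemma sinc_eq_integral_Ioi {t : ℝ} (ht : 0 < t) :
    Real.sinc t = ∫ s in Ioi (0 : ℝ), exp (-t * s) * sin t := by
  rw [MeasureTheory.integral_mul_const, integral_Ioi_exp_neg_mul ht, Real.sinc_of_ne_zero ht.ne',
    div_eq_inv_mul]

lemma integral_exp_neg_mul_mul_sin (s A : ℝ) :
    ∫ t in (0 : ℝ)..A, exp (-t * s) * sin t
      = (1 - exp (-A * s) * (cos A + s * sin A)) / (1 + s ^ 2) := by
  have hderiv (t : ℝ) : HasDerivAt (fun t => -(exp (-t * s) * (cos t + s * sin t)) / (1 + s ^ 2))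
      (exp (-t * s) * sin t) t := by
    refine ((((hasDerivAt_neg t).mul_const s).exp.mul
      ((hasDerivAt_cos t).add ((hasDerivAt_sin t).const_mul s))).neg.div_const
      (1 + s ^ 2)).congr_deriv ?_
    simp only [Pi.add_apply]
    field_simp
    ring
  rw [intervalIntegral.integral_eq_sub_of_hasDerivAt (fun t _ => hderiv t)
    ((by fun_prop : Continuous fun t => exp (-t * s) * sin t).intervalIntegrable _ _)]
  simp
  ring

lemma integrable_exp_neg_mul_mul_sin (A : ℝ) :
    Integrable (fun z : ℝ × ℝ => exp (-z.1 * z.2) * sin z.1)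
      ((volume.restrict (Ioc 0 A)).prod (volume.restrict (Ioi 0))) := by
  have hmeas : AEStronglyMeasurable (fun z : ℝ × ℝ => exp (-z.1 * z.2) * sin z.1)
      ((volume.restrict (Ioc 0 A)).prod (volume.restrict (Ioi 0))) :=
    (by fun_prop : Continuous fun z : ℝ × ℝ => exp (-z.1 * z.2) * sin z.1).aestronglyMeasurable
  rw [integrable_prod_iff hmeas]
  constructor
  · filter_upwards [ae_restrict_mem measurableSet_Ioc] with t ht
    exact (integrableOn_exp_mul_Ioi (neg_neg_of_pos ht.1) 0).mul_const _
  · refine (integrable_const (1 : ℝ)).mono' hmeas.norm.integral_prod_right' ?_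
    filter_upwards [ae_restrict_mem measurableSet_Ioc] with t ht
    have hnorm : ∫ s in Ioi (0 : ℝ), ‖exp (-t * s) * sin t‖ = t⁻¹ * |sin t| := by
      simp_rw [norm_mul, norm_of_nonneg (exp_pos _).le, norm_eq_abs]
      rw [MeasureTheory.integral_mul_const, integral_Ioi_exp_neg_mul ht.1]
    rw [hnorm, norm_of_nonneg (mul_nonneg (inv_nonneg.2 ht.1.le) (abs_nonneg _)),
      inv_mul_le_iff₀ ht.1, mul_one]
    exact (abs_sin_le_abs).trans (abs_of_pos ht.1).le

lemma integral_sinc_eq_integral_Ioi {A : ℝ} (hA : 0 < A) :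
    ∫ t in (0 : ℝ)..A, Real.sinc t
      = ∫ s in Ioi (0 : ℝ), (1 - exp (-A * s) * (cos A + s * sin A)) / (1 + s ^ 2) := by
  rw [intervalIntegral.integral_of_le hA.le,
    setIntegral_congr_fun measurableSet_Ioc fun t ht => sinc_eq_integral_Ioi ht.1,
    integral_integral_swap (integrable_exp_neg_mul_mul_sin A)]
  refine setIntegral_congr_fun measurableSet_Ioi fun s _ => ?_
  rw [← intervalIntegral.integral_of_le hA.le, integral_exp_neg_mul_mul_sin]

lemma abs_exp_neg_mul_mul_div_le {A s : ℝ} (hs : 0 ≤ s) :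
    |exp (-A * s) * (cos A + s * sin A) / (1 + s ^ 2)| ≤ 2 * exp (-A * s) := by
  have hpos : 0 < 1 + s ^ 2 := by positivity
  have htrig : |cos A + s * sin A| ≤ 1 + s := by
    calc |cos A + s * sin A| ≤ |cos A| + s * |sin A| := by
          simpa [abs_mul, abs_of_nonneg hs] using abs_add_le (cos A) (s * sin A)
      _ ≤ 1 + s * 1 := by gcongr <;> first | exact abs_cos_le_one A | exact abs_sin_le_one A
      _ = 1 + s := by ring
  rw [abs_div, abs_mul, abs_of_pos (exp_pos _), abs_of_pos hpos, div_le_iff₀ hpos]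
  have : 1 + s ≤ 2 * (1 + s ^ 2) := by nlinarith [sq_nonneg (s - 1)]
  nlinarith [exp_pos (-A * s), abs_nonneg (cos A + s * sin A)]

lemma abs_integral_sinc_sub_pi_div_two_le {A : ℝ} (hA : 0 < A) :
    |(∫ t in (0 : ℝ)..A, Real.sinc t) - π / 2| ≤ 2 / A := by
  set E := fun s => exp (-A * s) * (cos A + s * sin A) / (1 + s ^ 2)
  have hdom : IntegrableOn (fun s => 2 * exp (-A * s)) (Ioi 0) :=
    (integrableOn_exp_mul_Ioi (neg_neg_of_pos hA) 0).const_mul 2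
  have hbound : ∀ᵐ s ∂volume.restrict (Ioi (0 : ℝ)), ‖E s‖ ≤ 2 * exp (-A * s) := by
    filter_upwards [ae_restrict_mem measurableSet_Ioi] with s hs
    exact abs_exp_neg_mul_mul_div_le (le_of_lt hs)
  have hcont : Continuous E := by
    exact .div (by fun_prop) (by fun_prop) fun s => by positivity
  have hE : IntegrableOn E (Ioi 0) := hdom.mono' hcont.aestronglyMeasurable.restrict hbound
  have hsplit : ∫ t in (0 : ℝ)..A, Real.sinc t = π / 2 - ∫ s in Ioi (0 : ℝ), E s := by
    simp_rw [integral_sinc_eq_integral_Ioi hA, sub_div, one_div]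
    rw [integral_sub integrable_inv_one_add_sq.integrableOn hE, integral_Ioi_inv_one_add_sq,
      arctan_zero, sub_zero]
  calc |(∫ t in (0 : ℝ)..A, Real.sinc t) - π / 2| = ‖∫ s in Ioi (0 : ℝ), E s‖ := by
        rw [hsplit, sub_sub_cancel_left, abs_neg, norm_eq_abs]
    _ ≤ ∫ s in Ioi (0 : ℝ), 2 * exp (-A * s) := norm_integral_le_of_norm_le hdom hbound
    _ = 2 / A := by
        rw [MeasureTheory.integral_const_mul, integral_Ioi_exp_neg_mul hA, div_eq_mul_inv]

lemma abs_sint_le {x : ℝ} (hx : 0 < x) : |sint x| ≤ 2 / x := by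
  have hsint : sint x = 2 / π * (π / 2 - ∫ t in (0 : ℝ)..x, Real.sinc t) := by
    rw [sint, sinc_eq_real_sinc]
    field_simp
  have hcoef : 2 / π ≤ 1 := (div_le_one pi_pos).2 two_le_pi
  rw [hsint, abs_mul, abs_of_pos (by positivity), abs_sub_comm]
  calc 2 / π * |(∫ t in (0 : ℝ)..x, Real.sinc t) - π / 2| ≤ 1 * (2 / x) :=
        mul_le_mul hcoef (abs_integral_sinc_sub_pi_div_two_le hx) (abs_nonneg _) zero_le_one
    _ = 2 / x := one_mul _

lemma sint_sq_sq_le {ξ : ℝ} (hξ : ξ ≠ 0) : sint (ξ ^ 2) ^ 2 ≤ 4 / ξ ^ 4 := by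
  calc sint (ξ ^ 2) ^ 2 = |sint (ξ ^ 2)| ^ 2 := (sq_abs _).symm
    _ ≤ (2 / ξ ^ 2) ^ 2 := by gcongr; exact abs_sint_le (by positivity)
    _ = 4 / ξ ^ 4 := by ring

lemma integrable_of_even_of_abs_le_div_sq {f : ℝ → ℝ} (hf : Continuous f)
    (heven : ∀ x, f (-x) = f x) {C : ℝ} (hC : ∀ x, 1 ≤ x → |f x| ≤ C / x ^ 2) :
    Integrable f := by
  refine hf.locallyIntegrable.integrable_of_isBigO_atTop_of_norm_isNegInvariant
    (g := fun x : ℝ => x ^ (-2 : ℝ)) (Eventually.of_forall fun x => by simp [heven]) ?_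
    (integrableAtFilter_rpow_atTop_iff.2 (by norm_num))
  refine Asymptotics.IsBigO.of_bound C ?_
  filter_upwards [eventually_ge_atTop 1] with x hx
  have hx0 : 0 < x := by linarith
  rw [norm_eq_abs, norm_of_nonneg (by positivity), rpow_neg hx0.le, rpow_two, ← div_eq_mul_inv]
  exact hC x hx

lemma integrable_sint_sq : Integrable fun ξ : ℝ => sint (ξ ^ 2) ^ 2 := by
  refine integrable_of_even_of_abs_le_div_sq (C := 4) (by fun_prop)
    (fun x => by rw [neg_sq]) fun x hx => ?_
  have hx0 : 0 < x := by linarith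
  rw [abs_of_nonneg (sq_nonneg _)]
  calc sint (x ^ 2) ^ 2 ≤ 4 / x ^ 4 := sint_sq_sq_le hx0.ne'
    _ ≤ 4 / x ^ 2 := by gcongr; norm_num

lemma integrable_sq_mul_sint_sq : Integrable fun ξ : ℝ => ξ ^ 2 * sint (ξ ^ 2) ^ 2 := by
  refine integrable_of_even_of_abs_le_div_sq (C := 4) (by fun_prop)
    (fun x => by rw [neg_sq]) fun x hx => ?_
  have hx0 : 0 < x := by linarith
  rw [abs_of_nonneg (by positivity)]
  calc x ^ 2 * sint (x ^ 2) ^ 2 ≤ x ^ 2 * (4 / x ^ 4) := by gcongr; exact sint_sq_sq_le hx0.ne'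
    _ = 4 / x ^ 2 := by field_simp

lemma A₁_pos : 0 < A₁ := by
  have hcont : Continuous fun ξ : ℝ => sint (ξ ^ 2) ^ 2 := by fun_prop
  have hopen : IsOpen {ξ : ℝ | 0 < sint (ξ ^ 2) ^ 2} := isOpen_lt continuous_const hcont
  have hzero : (0 : ℝ) ∈ {ξ : ℝ | 0 < sint (ξ ^ 2) ^ 2} := by simp [sint]
  refine (integral_pos_iff_support_of_nonneg (fun ξ => sq_nonneg _) integrable_sint_sq).2 ?_
  exact (hopen.measure_pos volume ⟨0, hzero⟩).trans_le
    (measure_mono fun ξ hξ => ne_of_gt hξ)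

lemma integral_sint_sq_div {P : ℝ} (hP : 0 < P) :
    ∫ v : ℝ, sint ((v / P) ^ 2) ^ 2 = P * A₁ := by
  rw [Measure.integral_comp_div (fun ξ => sint (ξ ^ 2) ^ 2), abs_of_pos hP, smul_eq_mul, A₁]

lemma sq_mul_sint_sq_div {P : ℝ} (hP : P ≠ 0) (v : ℝ) :
    v ^ 2 * sint ((v / P) ^ 2) ^ 2 = P ^ 2 * ((v / P) ^ 2 * sint ((v / P) ^ 2) ^ 2) := by
  field_simp

lemma integrable_sq_mul_sint_sq_div {P : ℝ} (hP : P ≠ 0) :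
    Integrable fun v : ℝ => v ^ 2 * sint ((v / P) ^ 2) ^ 2 := by
  simp_rw [sq_mul_sint_sq_div hP]
  exact (integrable_sq_mul_sint_sq.comp_div hP).const_mul _

lemma integral_sq_mul_sint_sq_div {P : ℝ} (hP : 0 < P) :
    ∫ v : ℝ, v ^ 2 * sint ((v / P) ^ 2) ^ 2 = P ^ 3 * A₂ := by
  simp_rw [sq_mul_sint_sq_div hP.ne']
  rw [MeasureTheory.integral_const_mul,
    Measure.integral_comp_div (fun ξ => ξ ^ 2 * sint (ξ ^ 2) ^ 2), abs_of_pos hP, smul_eq_mul, A₂]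
  ring

lemma integrable_sq_mul_exp_neg_mul_sq {b : ℝ} (hb : 0 < b) :
    Integrable fun x : ℝ => x ^ 2 * exp (-b * x ^ 2) := by
  simpa [rpow_natCast] using integrable_rpow_mul_exp_neg_mul_sq hb (s := (2 : ℕ)) (by norm_num)

lemma integral_sq_mul_exp_neg_mul_sq {b : ℝ} (hb : 0 < b) :
    ∫ x : ℝ, x ^ 2 * exp (-b * x ^ 2) = (2 * b)⁻¹ * ∫ x : ℝ, exp (-b * x ^ 2) := by
  have hderiv (x : ℝ) : HasDerivAt (fun x => x * exp (-b * x ^ 2))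
      (exp (-b * x ^ 2) - 2 * b * (x ^ 2 * exp (-b * x ^ 2))) x := by
    refine ((hasDerivAt_id x).mul ((hasDerivAt_pow 2 x).const_mul (-b)).exp).congr_deriv ?_
    simp only [id]
    ring
  have hzero := integral_eq_zero_of_hasDerivAt_of_integrable hderiv
    ((integrable_exp_neg_mul_sq hb).sub ((integrable_sq_mul_exp_neg_mul_sq hb).const_mul _))
    (integrable_mul_exp_neg_mul_sq hb)
  rw [integral_sub (integrable_exp_neg_mul_sq hb)
    ((integrable_sq_mul_exp_neg_mul_sq hb).const_mul _), MeasureTheory.integral_const_mul,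
    sub_eq_zero] at hzero
  rw [hzero, inv_mul_cancel_left₀ (by positivity)]

noncomputable def addSubEquiv : (ℝ × ℝ) ≃ₗ[ℝ] ℝ × ℝ where
  toFun p := (p.1 + p.2, p.1 - p.2)
  invFun p := ((p.1 + p.2) / 2, (p.1 - p.2) / 2)
  map_add' p q := by ext <;> simp only [Prod.fst_add, Prod.snd_add] <;> ring
  map_smul' c p := by ext <;> simp <;> ring
  left_inv p := by ext <;> simp
  right_inv p := by ext <;> simp <;> ring

lemma det_addSubEquiv : LinearMap.det (addSubEquiv : (ℝ × ℝ) →ₗ[ℝ] ℝ × ℝ) = -2 := by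
  rw [← LinearMap.det_toMatrix (Module.Basis.finTwoProd ℝ), Matrix.det_fin_two]
  simp [LinearMap.toMatrix_apply, Module.Basis.finTwoProd, addSubEquiv]
  norm_num

lemma map_addSubEquiv_volume :
    Measure.map addSubEquiv (volume : Measure (ℝ × ℝ)) = ENNReal.ofReal 2⁻¹ • volume := by
  have hdet : LinearMap.det (addSubEquiv : (ℝ × ℝ) →ₗ[ℝ] ℝ × ℝ) ≠ 0 := by
    rw [det_addSubEquiv]; norm_num
  rw [show ⇑addSubEquiv = ⇑(addSubEquiv : (ℝ × ℝ) →ₗ[ℝ] ℝ × ℝ) from rfl,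
    Measure.map_linearMap_addHaar_eq_smul_addHaar _ hdet, det_addSubEquiv]
  norm_num

lemma integral_comp_addSubEquiv {E : Type*} [NormedAddCommGroup E] [NormedSpace ℝ E]
    (f : ℝ × ℝ → E) : ∫ p : ℝ × ℝ, f p = (2 : ℝ) • ∫ p : ℝ × ℝ, f (addSubEquiv p) := by
  have h : ∫ p, f p ∂Measure.map addSubEquiv volume = ∫ p, f (addSubEquiv p) :=
    integral_map_equiv addSubEquiv.toContinuousLinearEquiv.toHomeomorph.toMeasurableEquiv f
  rw [← h, map_addSubEquiv_volume, integral_smul_measure, smul_smul,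
    ENNReal.toReal_ofReal (by norm_num)]
  norm_num

lemma integral_sq_sub_sq_mul_mul {G H : ℝ → ℝ} (hG : Integrable G)
    (hG₂ : Integrable fun a => a ^ 2 * G a) (hH : Integrable H)
    (hH₂ : Integrable fun b => b ^ 2 * H b) :
    ∫ p : ℝ × ℝ, (p.1 ^ 2 - p.2 ^ 2) * (G p.1 * H p.2)
      = (∫ a, a ^ 2 * G a) * (∫ b, H b) - (∫ a, G a) * ∫ b, b ^ 2 * H b := by
  rw [← integral_prod_mul (fun a => a ^ 2 * G a) H, ← integral_prod_mul G (fun b => b ^ 2 * H b),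
    ← integral_sub (hG₂.mul_prod hH) (hG.mul_prod hH₂)]
  congr 1 with p
  ring

lemma mul_pNF_addSubEquiv {s P : ℝ} (hs : s ≠ 0) (hP : P ≠ 0) (p : ℝ × ℝ) :
    (addSubEquiv p).1 * (addSubEquiv p).2 * pNF s P (addSubEquiv p).1 (addSubEquiv p).2
      = (√(2 * π * s) * A₁ * P)⁻¹
        * ((p.1 ^ 2 - p.2 ^ 2) * (exp (-(2 / s) * p.1 ^ 2) * sint ((p.2 / P) ^ 2) ^ 2)) := by
  have hgauss : -(p.1 + p.2 + (p.1 - p.2)) ^ 2 / (2 * s) = -(2 / s) * p.1 ^ 2 := by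
    field_simp; ring
  have hsint : (p.1 + p.2 - (p.1 - p.2)) ^ 2 / (4 * P ^ 2) = (p.2 / P) ^ 2 := by
    field_simp; ring
  simp only [addSubEquiv, LinearEquiv.coe_mk, LinearMap.coe_mk, AddHom.coe_mk, pNF, hgauss, hsint]
  ring

/-- For every `s > 0` and `P > 0`, the cross moment of the near-field joint
density is `∫ x₁ x₂ p_NF^S(x₁,x₂) dx₁ dx₂ = (1/4)(s − 4A₂P²/A₁)`. -/
theorem pNF_crossMoment (s P : ℝ) (hs : 0 < s) (hP : 0 < P) :
    ∫ x : ℝ × ℝ, x.1 * x.2 * pNF s P x.1 x.2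
      = (1 / 4) * (s - 4 * A₂ * P ^ 2 / A₁) := by
  have hb : 0 < 2 / s := by positivity
  have hsqrt : √(π / (2 / s)) = √(2 * π * s) / 2 := by
    rw [show π / (2 / s) = 2 * π * s / 2 ^ 2 by field_simp, sqrt_div' _ (by positivity),
      sqrt_sq zero_le_two]
  rw [integral_comp_addSubEquiv, smul_eq_mul]
  simp_rw [mul_pNF_addSubEquiv hs.ne' hP.ne']
  rw [MeasureTheory.integral_const_mul, integral_sq_sub_sq_mul_mul (integrable_exp_neg_mul_sq hb)
    (integrable_sq_mul_exp_neg_mul_sq hb) (integrable_sint_sq.comp_div hP.ne')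
    (integrable_sq_mul_sint_sq_div hP.ne'),
    integral_sq_mul_exp_neg_mul_sq hb, integral_gaussian, hsqrt, integral_sint_sq_div hP,
    integral_sq_mul_sint_sq_div hP]
  have hA₁ := A₁_pos
  have hsqrt_pos : 0 < √(2 * π * s) := by positivity
  field_simp
  ring
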